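/- arXiv:2104.09421 — 2 statements merged into one kernel-verified Lean document; each statement's English description precedes it below -/
import Mathlib

section
/- Every Levi category is a generalized higher rank 1-graph: if C is an equidivisible small category with a size functor λ : C → ℕ such that λ⁻¹(1) consists of exactly the atoms of C, then λ satisfies the Weak Factorization Property. -/
open CategoryTheory

universe v u

/-- A size functor to `ℕ` on a small category `C`: kernel exactly the invertibles. -/
structure SizeFunctorN (C : Type u) [Category.{v} C] where
  lam : ∀ {X Y : C}, (X ⟶ Y) → ℕ
  map_id : ∀ X : C, lam (𝟙 X) = 0
  map_comp : ∀ {X Y Z : C} (f : X ⟶ Y) (g : Y ⟶ Z), lam (f ≫ g) = lam f + lam g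
  zero_iff : ∀ {X Y : C} (f : X ⟶ Y), lam f = 0 ↔ IsIso f

/-- An atom: a noninvertible morphism `a` such that whenever `a = bc`
(i.e. `a = c ≫ b`), either `b` or `c` is invertible. -/
def IsAtomMor {C : Type u} [Category.{v} C] {X Y : C} (a : X ⟶ Y) : Prop :=
  ¬ IsIso a ∧ ∀ ⦃W : C⦄ (c : X ⟶ W) (b : W ⟶ Y), a = c ≫ b → IsIso b ∨ IsIso c

/-- Equidivisibility: if `ab = cd` then one factorization refines the other. -/
def Equidivisible (C : Type u) [Category.{v} C] : Prop :=
  ∀ ⦃P Q R S : C⦄ (b : P ⟶ Q) (a : Q ⟶ S) (d : P ⟶ R) (c : R ⟶ S),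
    b ≫ a = d ≫ c →
      (∃ u : Q ⟶ R, a = u ≫ c ∧ d = b ≫ u) ∨ (∃ v : R ⟶ Q, c = v ≫ a ∧ b = d ≫ v)

/-- The Weak Factorization Property for an `ℕ`-valued size functor. -/
def HasWFP {C : Type u} [Category.{v} C] (S : SizeFunctorN C) : Prop :=
  ∀ ⦃X Y : C⦄ (a : X ⟶ Y) (m n : ℕ), S.lam a = m + n →
    ∃ (W : C) (a₂ : X ⟶ W) (a₁ : W ⟶ Y),
      a = a₂ ≫ a₁ ∧ S.lam a₁ = m ∧ S.lam a₂ = n ∧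
      ∀ ⦃W' : C⦄ (b₂ : X ⟶ W') (b₁ : W' ⟶ Y),
        a = b₂ ≫ b₁ → S.lam b₁ = m → S.lam b₂ = n →
        ∃ g : W' ⟶ W, IsIso g ∧ b₁ = g ≫ a₁ ∧ b₂ ≫ g = a₂

/-- Strip an atom off the left of any morphism of positive size. -/
lemma strip_atom {C : Type u} [Category.{v} C] (S : SizeFunctorN C)
    (hatom : ∀ ⦃X Y : C⦄ (f : X ⟶ Y), S.lam f = 1 ↔ IsAtomMor f) :
    ∀ (k : ℕ) {X Y : C} (f : X ⟶ Y), S.lam f = k + 1 →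
      ∃ (W : C) (c : X ⟶ W) (b : W ⟶ Y), f = c ≫ b ∧ S.lam c = 1 := by
  intro k
  induction k using Nat.strong_induction_on with
  | _ k ih =>
    intro X Y f hf
    rcases Nat.eq_zero_or_pos k with rfl | hk
    · exact ⟨Y, f, 𝟙 Y, by simp, hf⟩
    · -- f is neither iso nor atom
      have hniso : ¬ IsIso f := by
        intro h
        rw [← S.zero_iff] at h
        omega
      have hnatom : ¬ IsAtomMor f := by
        intro h
        rw [← hatom] at h
        omega
      rw [IsAtomMor, not_and_or] at hnatom
      rcases hnatom with h | h
      · exact absurd hniso (by simpa using h)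
      · push_neg at h
        obtain ⟨W, c, b, hfc, hb, hc⟩ := h
        rw [← S.zero_iff] at hb hc
        have hcomp := S.map_comp c b
        rw [← hfc, hf] at hcomp
        obtain ⟨kc, hkc⟩ : ∃ kc, S.lam c = kc + 1 :=
          ⟨S.lam c - 1, by omega⟩
        have hklt : kc < k := by omega
        obtain ⟨W', c', b', hcc, hc1⟩ := ih kc hklt c hkc
        exact ⟨W', c', b' ≫ b, by rw [hfc, hcc, Category.assoc], hc1⟩

/-- Every Levi category is a generalized higher rank 1-graph. -/
theorem levi_hasWFP {C : Type u} [Category.{v} C] (S : SizeFunctorN C)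
    (heq : Equidivisible C)
    (hatom : ∀ ⦃X Y : C⦄ (f : X ⟶ Y), S.lam f = 1 ↔ IsAtomMor f) :
    HasWFP S := by
  -- existence of a factorization with prescribed sizes
  have exist : ∀ (n m : ℕ) {X Y : C} (a : X ⟶ Y), S.lam a = m + n →
      ∃ (W : C) (a₂ : X ⟶ W) (a₁ : W ⟶ Y),
        a = a₂ ≫ a₁ ∧ S.lam a₁ = m ∧ S.lam a₂ = n := by
    intro n
    induction n with
    | zero =>
      intro m X Y a ha
      exact ⟨X, 𝟙 X, a, by simp, by omega, S.map_id X⟩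
    | succ n ihn =>
      intro m X Y a ha
      obtain ⟨W, c, b, hab, hc1⟩ :=
        strip_atom S hatom (m + n) a (by omega)
      have hcomp := S.map_comp c b
      rw [← hab, ha] at hcomp
      obtain ⟨W', a₂', a₁, h1, h2, h3⟩ := ihn m b (by omega)
      refine ⟨W', c ≫ a₂', a₁, ?_, h2, ?_⟩
      · rw [hab, h1, Category.assoc]
      · rw [S.map_comp]; omega
  intro X Y a m n ha
  obtain ⟨W, a₂, a₁, hfac, hm, hn⟩ := exist n m a ha
  refine ⟨W, a₂, a₁, hfac, hm, hn, ?_⟩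
  intro W' b₂ b₁ hfac' hm' hn'
  have heqn : b₂ ≫ b₁ = a₂ ≫ a₁ := by rw [← hfac, ← hfac']
  rcases heq b₂ b₁ a₂ a₁ heqn with ⟨u, hu1, hu2⟩ | ⟨v, hv1, hv2⟩
  · have : S.lam b₁ = S.lam u + S.lam a₁ := by rw [hu1, S.map_comp]
    have hu0 : S.lam u = 0 := by omega
    rw [S.zero_iff] at hu0
    exact ⟨u, hu0, hu1, hu2.symm⟩
  · have : S.lam a₁ = S.lam v + S.lam b₁ := by rw [hv1, S.map_comp]
    have hv0 : S.lam v = 0 := by omega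
    rw [S.zero_iff] at hv0
    refine ⟨inv v, inferInstance, ?_, ?_⟩
    · rw [hv1, ← Category.assoc, IsIso.inv_hom_id, Category.id_comp]
    · rw [hv2, Category.assoc, IsIso.hom_inv_id, Category.comp_id]
end

section
/- Every generalized higher rank 1-graph is a Levi category: if C is a small category with a size functor λ : C → ℕ satisfying the Weak Factorization Property, then C is equidivisible and λ⁻¹(1) consists of exactly the atoms of C. -/
open CategoryTheory

universe v u

/-- Every generalized higher rank 1-graph is a Levi category. -/
theorem wfp_levi {C : Type u} [Category.{v} C] (S : SizeFunctorN C)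
    (hW : HasWFP S) :
    Equidivisible C ∧ ∀ ⦃X Y : C⦄ (f : X ⟶ Y), S.lam f = 1 ↔ IsAtomMor f := by
  constructor
  · intro P Q R SS b a d c h
    have htot : S.lam b + S.lam a = S.lam d + S.lam c := by
      rw [← S.map_comp, ← S.map_comp, h]
    rcases le_total (S.lam c) (S.lam a) with hca | hca
    · -- a is longer: a factors through c
      left
      obtain ⟨W, a₂, a₁, hfa, h1, h2, -⟩ :=
        hW a (S.lam c) (S.lam a - S.lam c) (by omega)
      obtain ⟨V, e₂, e₁, he, he1, he2, huniq⟩ :=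
        hW (b ≫ a) (S.lam c) (S.lam d) (by rw [h, S.map_comp]; omega)
      obtain ⟨g, hg, hc, hdg⟩ := huniq d c h rfl rfl
      obtain ⟨g', hg', ha1, hbg⟩ := huniq (b ≫ a₂) a₁
        (by rw [hfa, Category.assoc]) h1 (by rw [S.map_comp]; omega)
      refine ⟨a₂ ≫ g' ≫ inv g, ?_, ?_⟩
      · rw [hfa, ha1, hc]
        simp
      · have : (b ≫ a₂) ≫ g' = d ≫ g := by rw [hbg, hdg]
        calc d = (d ≫ g) ≫ inv g := by simp
        _ = ((b ≫ a₂) ≫ g') ≫ inv g := by rw [this]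
        _ = b ≫ a₂ ≫ g' ≫ inv g := by simp
    · -- c is longer: c factors through a
      right
      obtain ⟨W, c₂, c₁, hfc, h1, h2, -⟩ :=
        hW c (S.lam a) (S.lam c - S.lam a) (by omega)
      obtain ⟨V, e₂, e₁, he, he1, he2, huniq⟩ :=
        hW (b ≫ a) (S.lam a) (S.lam b) (S.map_comp b a |>.trans (by omega))
      obtain ⟨g, hg, ha, hbg⟩ := huniq b a rfl rfl rfl
      obtain ⟨g', hg', hc1, hdg⟩ := huniq (d ≫ c₂) c₁
        (by rw [h, hfc, Category.assoc]) h1 (by rw [S.map_comp]; omega)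
      refine ⟨c₂ ≫ g' ≫ inv g, ?_, ?_⟩
      · rw [hfc, hc1, ha]
        simp
      · have : (d ≫ c₂) ≫ g' = b ≫ g := by rw [hbg, hdg]
        calc b = (b ≫ g) ≫ inv g := by simp
        _ = ((d ≫ c₂) ≫ g') ≫ inv g := by rw [this]
        _ = d ≫ c₂ ≫ g' ≫ inv g := by simp
  · intro X Y f
    constructor
    · intro hf
      refine ⟨fun hi => by have := (S.zero_iff f).mpr hi; omega, ?_⟩
      intro W c b hfact
      have : S.lam c + S.lam b = 1 := by rw [← S.map_comp, ← hfact, hf]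
      rcases Nat.eq_zero_or_pos (S.lam b) with hb | hb
      · exact Or.inl ((S.zero_iff b).mp hb)
      · exact Or.inr ((S.zero_iff c).mp (by omega))
    · rintro ⟨hni, hatom⟩
      have h0 : S.lam f ≠ 0 := fun h0 => hni ((S.zero_iff f).mp h0)
      by_contra hne
      have h2 : 2 ≤ S.lam f := by omega
      obtain ⟨W, a₂, a₁, hfa, h1, hA2, -⟩ :=
        hW f 1 (S.lam f - 1) (by omega)
      rcases hatom a₂ a₁ hfa with hi | hi
      · have := (S.zero_iff a₁).mpr hi; omega
      · have := (S.zero_iff a₂).mpr hi; omega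
end
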